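/- arXiv:1711.03152 — 3 statements merged into one kernel-verified Lean document; each statement's English description precedes it below -/
import Mathlib

section
/- Let X₁,…,X_N be independent random variables and Z = f(X₁,…,X_N) square-integrable. For each i let X_i' be an independent copy of X_i (the copies being mutually independent and independent of (X₁,…,X_N)), and let Z^{(i)} = f(X₁,…,X_i',…,X_N). Then Var[Z] ≤ (1/2) · Σ_{i=1}^N E[(Z − Z^{(i)})²]. -/
/-!
Realise `Z = f(X)` and its copies on the doubled product space `(∏ μᵢ) ⊗ (∏ μᵢ)`. Exchanging the
coordinates of the two factors on any set `s` of indices preserves this measure, and such exchanges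
compose by symmetric difference of the index sets. With `Z' = f(X')` independent of `Z`,
`Var Z = E[Z (Z - Z')]`, and `Z - Z'` telescopes along the hybrids in which the coordinates in `s`
are taken from `X'`, adding one index at a time. Exchanging the `i`-th coordinates maps `Z` to
`Z⁽ⁱ⁾` and the increment `Eᵢ` of index `i` to `-Eᵢ`, so `2 E[Z Eᵢ] = E[(Z - Z⁽ⁱ⁾) Eᵢ]`;
exchanging the coordinates already taken from `X'` maps `Z - Z⁽ⁱ⁾` to `Eᵢ`, so both have the same
second moment, and `2ab ≤ a² + b²` gives `E[Z Eᵢ] ≤ E[(Z - Z⁽ⁱ⁾)²] / 2`.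
-/

open MeasureTheory ProbabilityTheory Finset
open scoped symmDiff

lemma integral_mul_le_half_integral_sub_sq {α : Type*} [MeasurableSpace α] {ν : Measure α}
    {g h e : α → ℝ} (hg : MemLp g 2 ν) (hh : MemLp h 2 ν) (he : MemLp e 2 ν)
    (h_anti : ∫ a, g a * e a ∂ν = -∫ a, h a * e a ∂ν)
    (h_norm : ∫ a, e a ^ 2 ∂ν = ∫ a, (g a - h a) ^ 2 ∂ν) :
    ∫ a, g a * e a ∂ν ≤ 1 / 2 * ∫ a, (g a - h a) ^ 2 ∂ν := by
  have hgh : MemLp (fun a => g a - h a) 2 ν := hg.sub hh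
  have hge : Integrable (fun a => g a * e a) ν := hg.integrable_mul he
  have hhe : Integrable (fun a => h a * e a) ν := hh.integrable_mul he
  have h_amgm : ∫ a, 2 * ((g a - h a) * e a) ∂ν ≤ ∫ a, ((g a - h a) ^ 2 + e a ^ 2) ∂ν :=
    integral_mono ((hgh.integrable_mul he).const_mul 2) (hgh.integrable_sq.add he.integrable_sq)
      fun a => by simpa only [mul_assoc] using two_mul_le_add_sq (g a - h a) (e a)
  simp only [sub_mul] at h_amgm
  rw [integral_const_mul, integral_sub hge hhe,
    integral_add hgh.integrable_sq he.integrable_sq, h_norm] at h_amgm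
  linarith

lemma variance_eq_integral_mul_sub {α : Type*} [MeasurableSpace α] {ν : Measure α}
    [IsProbabilityMeasure ν] {g : α → ℝ} (hg : MemLp g 2 ν) :
    Var[g; ν] = ∫ p, g p.1 * (g p.1 - g p.2) ∂ν.prod ν := by
  have hg₁ : MemLp (fun p : α × α => g p.1) 2 (ν.prod ν) :=
    hg.comp_measurePreserving measurePreserving_fst
  have hg₂ : MemLp (fun p : α × α => g p.2) 2 (ν.prod ν) :=
    hg.comp_measurePreserving measurePreserving_snd
  have hg₁₁ : Integrable (fun p : α × α => g p.1 * g p.1) (ν.prod ν) := hg₁.integrable_mul hg₁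
  have hg₁₂ : Integrable (fun p : α × α => g p.1 * g p.2) (ν.prod ν) := hg₁.integrable_mul hg₂
  simp_rw [mul_sub]
  rw [variance_eq_sub hg, integral_sub hg₁₁ hg₁₂, integral_prod_mul,
    integral_fun_fst (fun x => g x * g x)]
  simp [sq]

namespace EfronStein

variable {ι : Type*} [DecidableEq ι] {Ω : ι → Type*}

def swapOn (s : Finset ι) (p : (∀ i, Ω i) × (∀ i, Ω i)) : (∀ i, Ω i) × (∀ i, Ω i) :=
  (s.piecewise p.2 p.1, s.piecewise p.1 p.2)

lemma swapOn_swapOn (s t : Finset ι) (p : (∀ i, Ω i) × (∀ i, Ω i)) :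
    swapOn s (swapOn t p) = swapOn (s ∆ t) p := by
  ext j <;> by_cases hs : j ∈ s <;> by_cases ht : j ∈ t <;>
    simp [swapOn, Finset.piecewise, mem_symmDiff, hs, ht]

lemma swapOn_involutive (s : Finset ι) : Function.Involutive (swapOn (Ω := Ω) s) := fun p => by
  ext j <;> by_cases hs : j ∈ s <;> simp [swapOn, Finset.piecewise, hs]

lemma swapOn_preimage_pi_prod_pi (s : Finset ι) (A B : ∀ i, Set (Ω i)) :
    swapOn s ⁻¹' (Set.univ.pi A ×ˢ Set.univ.pi B)
      = Set.univ.pi (s.piecewise B A) ×ˢ Set.univ.pi (s.piecewise A B) := by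
  ext p
  simp only [Set.mem_preimage, Set.mem_prod, Set.mem_univ_pi, ← forall_and]
  refine forall_congr' fun j => ?_
  by_cases hj : j ∈ s <;> simp [swapOn, hj, and_comm]

variable [∀ i, MeasurableSpace (Ω i)]

lemma measurable_swapOn (s : Finset ι) : Measurable (swapOn (Ω := Ω) s) := by
  refine .prodMk (measurable_pi_lambda _ fun j => ?_) (measurable_pi_lambda _ fun j => ?_) <;>
    by_cases hj : j ∈ s <;> simp only [Finset.piecewise, hj, if_true, if_false] <;> fun_prop

def swapOnEquiv (s : Finset ι) : ((∀ i, Ω i) × (∀ i, Ω i)) ≃ᵐ ((∀ i, Ω i) × (∀ i, Ω i)) :=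
  .ofInvolutive _ (swapOn_involutive s) (measurable_swapOn s)

section SigmaFinite

variable [Fintype ι] (μ : ∀ i, Measure (Ω i)) [∀ i, SigmaFinite (μ i)]

lemma measurePreserving_swapOn (s : Finset ι) :
    MeasurePreserving (swapOn s) ((Measure.pi μ).prod (Measure.pi μ))
      ((Measure.pi μ).prod (Measure.pi μ)) := by
  have S := Measure.FiniteSpanningSetsIn.pi fun i => (μ i).toFiniteSpanningSetsIn
  refine ⟨measurable_swapOn s, (Measure.prod_eq_generateFrom generateFrom_pi generateFrom_pi
    isPiSystem_pi isPiSystem_pi S S ?_).symm⟩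
  rintro _ ⟨A, hA, rfl⟩ _ ⟨B, hB, rfl⟩
  rw [Measure.map_apply (measurable_swapOn s) ((MeasurableSet.univ_pi fun i => hA i trivial).prod
      (MeasurableSet.univ_pi fun i => hB i trivial)),
    swapOn_preimage_pi_prod_pi, Measure.prod_prod, Measure.pi_pi, Measure.pi_pi, Measure.pi_pi,
    Measure.pi_pi, ← prod_mul_distrib, ← prod_mul_distrib]
  refine prod_congr rfl fun j _ => ?_
  by_cases hj : j ∈ s <;> simp [hj, mul_comm]

lemma integral_comp_swapOn (s : Finset ι) (g : (∀ i, Ω i) × (∀ i, Ω i) → ℝ) :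
    ∫ p, g (swapOn s p) ∂(Measure.pi μ).prod (Measure.pi μ)
      = ∫ p, g p ∂(Measure.pi μ).prod (Measure.pi μ) :=
  (measurePreserving_swapOn μ s).integral_comp' (f := swapOnEquiv s) g

end SigmaFinite

variable [Fintype ι] (μ : ∀ i, Measure (Ω i)) [∀ i, IsProbabilityMeasure (μ i)]
  {f : (∀ i, Ω i) → ℝ}

local notation "𝐏" => Measure.prod (Measure.pi μ) (Measure.pi μ)

lemma memLp_comp_swapOn (hf : MemLp f 2 (Measure.pi μ)) (s : Finset ι) :
    MemLp (fun p => f (swapOn s p).1) 2 𝐏 :=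
  hf.comp_measurePreserving (measurePreserving_fst.comp (measurePreserving_swapOn μ s))

lemma integral_mul_sub_swapOn_symmDiff_le (hf : MemLp f 2 (Measure.pi μ)) (u : Finset ι)
    (i : ι) :
    ∫ p, f p.1 * (f (swapOn u p).1 - f (swapOn ({i} ∆ u) p).1) ∂𝐏
      ≤ 1 / 2 * ∫ p, (f p.1 - f (swapOn {i} p).1) ^ 2 ∂𝐏 := by
  have hF : ∀ s, MemLp (fun p => f (swapOn s p).1) 2 𝐏 := memLp_comp_swapOn μ hf
  have hF₀ : MemLp (fun p => f (p : (∀ i, Ω i) × (∀ i, Ω i)).1) 2 𝐏 :=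
    hf.comp_measurePreserving measurePreserving_fst
  have h_anti : ∫ p, f p.1 * (f (swapOn u p).1 - f (swapOn ({i} ∆ u) p).1) ∂𝐏
      = -∫ p, f (swapOn {i} p).1 * (f (swapOn u p).1 - f (swapOn ({i} ∆ u) p).1) ∂𝐏 := by
    rw [← integral_comp_swapOn μ {i}, ← integral_neg]
    simp only [swapOn_swapOn, symmDiff_symmDiff_self', symmDiff_comm u, neg_mul_eq_mul_neg,
      neg_sub]
  have h_norm : ∫ p, (f (swapOn u p).1 - f (swapOn ({i} ∆ u) p).1) ^ 2 ∂𝐏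
      = ∫ p, (f p.1 - f (swapOn {i} p).1) ^ 2 ∂𝐏 := by
    rw [← integral_comp_swapOn μ u (fun p => (f p.1 - f (swapOn {i} p).1) ^ 2)]
    simp only [swapOn_swapOn]
  exact integral_mul_le_half_integral_sub_sq hF₀ (hF {i}) ((hF u).sub (hF _)) h_anti h_norm

lemma integral_mul_sub_swapOn_le (hf : MemLp f 2 (Measure.pi μ)) (u : Finset ι) :
    ∫ p, f p.1 * (f p.1 - f (swapOn u p).1) ∂𝐏
      ≤ 1 / 2 * ∑ i ∈ u, ∫ p, (f p.1 - f (swapOn {i} p).1) ^ 2 ∂𝐏 := by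
  induction u using Finset.induction_on with
  | empty => simp [swapOn]
  | insert i u hi ih =>
    have hF : ∀ s, MemLp (fun p => f (swapOn s p).1) 2 𝐏 := memLp_comp_swapOn μ hf
    have hF₀ : MemLp (fun p => f (p : (∀ i, Ω i) × (∀ i, Ω i)).1) 2 𝐏 :=
      hf.comp_measurePreserving measurePreserving_fst
    have h_insert : insert i u = {i} ∆ u := by
      rw [insert_eq, symmDiff_eq_union (disjoint_singleton_left.mpr hi)]
    have h_split : ∫ p, f p.1 * (f p.1 - f (swapOn ({i} ∆ u) p).1) ∂𝐏
        = ∫ p, f p.1 * (f p.1 - f (swapOn u p).1) ∂𝐏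
          + ∫ p, f p.1 * (f (swapOn u p).1 - f (swapOn ({i} ∆ u) p).1) ∂𝐏 := by
      rw [← integral_add]
      · simp only [← mul_add, sub_add_sub_cancel]
      · exact hF₀.integrable_mul (hF₀.sub (hF u))
      · exact hF₀.integrable_mul ((hF u).sub (hF _))
    rw [sum_insert hi, mul_add, h_insert, h_split]
    linarith [integral_mul_sub_swapOn_symmDiff_le μ hf u i]

end EfronStein

open EfronStein in
theorem efron_stein_general
    {N : ℕ} {Ω : Fin N → Type*} [∀ i, MeasurableSpace (Ω i)]
    (μ : ∀ i, Measure (Ω i)) [∀ i, IsProbabilityMeasure (μ i)]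
    (f : (∀ i, Ω i) → ℝ)
    (hf2 : MemLp f 2 (Measure.pi μ)) :
    variance f (Measure.pi μ)
      ≤ (1 / 2) * ∑ i : Fin N,
          ∫ p, (f p.1 - f (Function.update p.1 i (p.2 i))) ^ 2
            ∂((Measure.pi μ).prod (Measure.pi μ)) := by
  have h := integral_mul_sub_swapOn_le μ hf2 univ
  simp only [swapOn, piecewise_univ, piecewise_singleton] at h
  rwa [variance_eq_integral_mul_sub hf2]

/-- The Efron–Stein (Poincaré) inequality for product measures: if
`X₁, …, X_N` are independent random variables (represented by the product
measure `⊗ᵢ μᵢ`), `Z = f(X₁, …, X_N)` is square-integrable, and `Z⁽ⁱ⁾` is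
obtained by resampling the `i`-th coordinate with an independent copy
(represented by a second independent copy of the product measure), then
`Var[Z] ≤ (1/2) Σᵢ E[(Z − Z⁽ⁱ⁾)²]`. -/
theorem efron_stein
    {N : ℕ} {Ω : Fin N → Type*} [∀ i, MeasurableSpace (Ω i)]
    (μ : ∀ i, Measure (Ω i)) [∀ i, IsProbabilityMeasure (μ i)]
    (f : (∀ i, Ω i) → ℝ) (hf : Measurable f)
    (hf2 : MemLp f 2 (Measure.pi μ)) :
    variance f (Measure.pi μ)
      ≤ (1 / 2) * ∑ i : Fin N,
          ∫ p, (f p.1 - f (Function.update p.1 i (p.2 i))) ^ 2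
            ∂((Measure.pi μ).prod (Measure.pi μ)) :=
  efron_stein_general μ f hf2
end

section
/- Let X₁,…,X_N and Y₁,…,Y_N be as in the Efron–Stein setting, and let Y = g(X₁,…,X_N), Z = f(X₁,…,X_N) be square-integrable. With Y^{(i)}, Z^{(i)} denoting resampled versions in the i-th coordinate, one has Cov[Y, Z] ≤ (1/2) Σ_{i=1}^N E[(Y − Y^{(i)})²]^{1/2} · E[(Z − Z^{(i)})²]^{1/2}. -/
/-!
Write `x` for the sample and `y` for the independent copy, and let `zᵏ` be `x` with its first `k`
coordinates replaced by those of `y`. Then `Cov[g, f] = E[g(x) f(z⁰)] - E[g(x) f(zᴺ)]` telescopes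
into `Σᵢ E[g(x) (f(zⁱ) - f(zⁱ⁺¹))]`. Exchanging `xᵢ` and `yᵢ` preserves the law of `(x, y)`, turns
`g(x)` into `g(x⁽ⁱ⁾)` and swaps `zⁱ` with `zⁱ⁺¹`, so the `i`-th term equals
`½ E[(g(x) - g(x⁽ⁱ⁾)) (f(zⁱ) - f(zⁱ⁺¹))]`. Cauchy–Schwarz bounds it, and `f(zⁱ) - f(zⁱ⁺¹)` has
the law of `f(x) - f(x⁽ⁱ⁾)` because exchanging the first `i` coordinates maps one to the other.
-/

open MeasureTheory Set Function

namespace MeasurableEquiv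

variable {ι : Type*} {α β : ι → Type*} [∀ i, MeasurableSpace (α i)] [∀ i, MeasurableSpace (β i)]

def piProdEquivProdPi : (∀ i, α i × β i) ≃ᵐ (∀ i, α i) × (∀ i, β i) where
  toFun a := (fun i => (a i).1, fun i => (a i).2)
  invFun p i := (p.1 i, p.2 i)
  left_inv _ := rfl
  right_inv _ := rfl
  measurable_toFun := by simp only [Equiv.coe_fn_mk]; fun_prop
  measurable_invFun := by simp only [Equiv.coe_fn_symm_mk]; fun_prop

end MeasurableEquiv

theorem measurePreserving_piProdEquivProdPi {ι : Type*} [Fintype ι] {α β : ι → Type*}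
    [∀ i, MeasurableSpace (α i)] [∀ i, MeasurableSpace (β i)]
    (μ : ∀ i, Measure (α i)) (ν : ∀ i, Measure (β i))
    [∀ i, SigmaFinite (μ i)] [∀ i, SigmaFinite (ν i)] :
    MeasurePreserving MeasurableEquiv.piProdEquivProdPi
      (.pi fun i ↦ (μ i).prod (ν i)) ((Measure.pi μ).prod (Measure.pi ν)) where
  measurable := MeasurableEquiv.piProdEquivProdPi.measurable
  map_eq := by
    refine (Measure.FiniteSpanningSetsIn.ext ?_ (isPiSystem_pi.prod isPiSystem_pi)
      ((Measure.FiniteSpanningSetsIn.pi fun i ↦ (μ i).toFiniteSpanningSetsIn).prod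
      (Measure.FiniteSpanningSetsIn.pi fun i ↦ (ν i).toFiniteSpanningSetsIn)) ?_).symm
    · refine (generateFrom_eq_prod generateFrom_pi generateFrom_pi ?_ ?_).symm
      · exact (Measure.FiniteSpanningSetsIn.pi
          fun i ↦ (μ i).toFiniteSpanningSetsIn).isCountablySpanning
      · exact (Measure.FiniteSpanningSetsIn.pi
          fun i ↦ (ν i).toFiniteSpanningSetsIn).isCountablySpanning
    · rintro _ ⟨s, ⟨s, _, rfl⟩, ⟨_, ⟨t, _, rfl⟩, rfl⟩⟩
      rw [MeasurableEquiv.map_apply,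
        show MeasurableEquiv.piProdEquivProdPi ⁻¹' (univ.pi s ×ˢ univ.pi t) =
          univ.pi fun i ↦ s i ×ˢ t i by
        ext; simp [MeasurableEquiv.piProdEquivProdPi, mem_pi, forall_and]]
      simp_rw [Measure.pi_pi, Measure.prod_prod, Measure.pi_pi, Finset.prod_mul_distrib]

section Resampling

variable {ι : Type*} {Ω : ι → Type*}

def swapOn (s : Set ι) [DecidablePred (· ∈ s)] (p : (∀ i, Ω i) × (∀ i, Ω i)) :
    (∀ i, Ω i) × (∀ i, Ω i) :=
  (s.piecewise p.2 p.1, s.piecewise p.1 p.2)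

variable (s : Set ι) [DecidablePred (· ∈ s)]

lemma swapOn_involutive : Involutive (swapOn (Ω := Ω) s) := by
  intro p
  ext j <;> by_cases hj : j ∈ s <;> simp [swapOn, hj]

lemma swapOn_singleton_fst [DecidableEq ι] (i : ι) (p : (∀ i, Ω i) × (∀ i, Ω i)) :
    (swapOn {i} p).1 = update p.1 i (p.2 i) := by
  ext j
  by_cases hj : j = i
  · subst hj; simp [swapOn]
  · simp [swapOn, hj]

variable [∀ i, MeasurableSpace (Ω i)]

lemma swapOn_eq_conj :
    swapOn (Ω := Ω) s = MeasurableEquiv.piProdEquivProdPi ∘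
      (fun a i => if i ∈ s then (a i).swap else a i) ∘ MeasurableEquiv.piProdEquivProdPi.symm := by
  ext p j <;> by_cases hj : j ∈ s <;>
    simp [swapOn, hj, MeasurableEquiv.piProdEquivProdPi]

lemma measurePreserving_swapOn [Fintype ι] (μ : ∀ i, Measure (Ω i)) [∀ i, SigmaFinite (μ i)] :
    MeasurePreserving (swapOn s) ((Measure.pi μ).prod (Measure.pi μ))
      ((Measure.pi μ).prod (Measure.pi μ)) := by
  have hunzip := measurePreserving_piProdEquivProdPi μ μ
  have hswap : MeasurePreserving (fun (a : ∀ i, Ω i × Ω i) i => if i ∈ s then (a i).swap else a i)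
      (.pi fun i => (μ i).prod (μ i)) (.pi fun i => (μ i).prod (μ i)) := by
    refine measurePreserving_pi (fun i => (μ i).prod (μ i)) (fun i => (μ i).prod (μ i))
      (f := fun i x => if i ∈ s then x.swap else x) fun i => ?_
    by_cases hi : i ∈ s
    · simpa [hi] using Measure.measurePreserving_swap
    · simp only [hi, if_false]; exact MeasurePreserving.id _
  rw [swapOn_eq_conj]
  exact hunzip.comp (hswap.comp (hunzip.symm _))

end Resampling

section Symmetrization

variable {α : Type*} [MeasurableSpace α] {ν : Measure α} {u v : α → ℝ}

lemma integral_mul_le_sqrt_mul_sqrt (hu : MemLp u 2 ν) (hv : MemLp v 2 ν) :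
    ∫ x, u x * v x ∂ν ≤ √(∫ x, u x ^ 2 ∂ν) * √(∫ x, v x ^ 2 ∂ν) := by
  have htwo : ENNReal.ofReal 2 = 2 := ENNReal.ofReal_ofNat 2
  calc ∫ x, u x * v x ∂ν ≤ ∫ x, ‖u x‖ * ‖v x‖ ∂ν :=
        integral_mono (hu.integrable_mul hv) (hu.norm.integrable_mul hv.norm)
          fun x => by simpa [abs_mul] using le_abs_self (u x * v x)
    _ ≤ (∫ x, ‖u x‖ ^ (2 : ℝ) ∂ν) ^ (1 / 2 : ℝ) * (∫ x, ‖v x‖ ^ (2 : ℝ) ∂ν) ^ (1 / 2 : ℝ) :=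
        integral_mul_norm_le_Lp_mul_Lq Real.HolderConjugate.two_two (htwo ▸ hu) (htwo ▸ hv)
    _ = √(∫ x, u x ^ 2 ∂ν) * √(∫ x, v x ^ 2 ∂ν) := by
        simp only [Real.sqrt_eq_rpow, Real.rpow_two, Real.norm_eq_abs, sq_abs]

variable {σ : α → α} (hσ : MeasurePreserving σ ν ν) (hinv : Involutive σ)
include hσ hinv

lemma integral_comp_involutive (G : α → ℝ) : ∫ x, G (σ x) ∂ν = ∫ x, G x ∂ν :=
  hσ.integral_comp (MeasurableEquiv.ofInvolutive σ hinv hσ.measurable).measurableEmbedding G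

lemma integral_mul_eq_half_integral_sub_comp_mul (hu : MemLp u 2 ν) (hv : MemLp v 2 ν)
    (hv_anti : ∀ x, v (σ x) = -v x) :
    ∫ x, u x * v x ∂ν = 1 / 2 * ∫ x, (u x - u (σ x)) * v x ∂ν := by
  have hswapped : ∫ x, u (σ x) * v x ∂ν = -∫ x, u x * v x ∂ν := by
    rw [← integral_comp_involutive hσ hinv, ← integral_neg]
    simp only [hinv _, hv_anti, mul_neg]
  simp_rw [sub_mul]
  rw [integral_sub (f := fun x => u x * v x) (g := fun x => u (σ x) * v x)
    (hu.integrable_mul hv) ((hu.comp_measurePreserving hσ).integrable_mul hv), hswapped]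
  ring

lemma integral_mul_le_of_involutive (hu : MemLp u 2 ν) (hv : MemLp v 2 ν)
    (hv_anti : ∀ x, v (σ x) = -v x) :
    ∫ x, u x * v x ∂ν ≤ 1 / 2 * (√(∫ x, (u x - u (σ x)) ^ 2 ∂ν) * √(∫ x, v x ^ 2 ∂ν)) := by
  rw [integral_mul_eq_half_integral_sub_comp_mul hσ hinv hu hv hv_anti]
  gcongr
  exact integral_mul_le_sqrt_mul_sqrt (hu.sub (hu.comp_measurePreserving hσ)) hv

end Symmetrization

section Interpolation

variable {N : ℕ} {Ω : Fin N → Type*}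

def interpolate (k : ℕ) (p : (∀ i, Ω i) × (∀ i, Ω i)) : ∀ i, Ω i :=
  (swapOn {j : Fin N | (j : ℕ) < k} p).1

lemma interpolate_zero (p : (∀ i, Ω i) × (∀ i, Ω i)) : interpolate 0 p = p.1 := by
  ext j; simp [interpolate, swapOn]

lemma interpolate_self (p : (∀ i, Ω i) × (∀ i, Ω i)) : interpolate N p = p.2 := by
  ext j; simp [interpolate, swapOn]

lemma update_interpolate (i : Fin N) (p : (∀ i, Ω i) × (∀ i, Ω i)) :
    update (interpolate i p) i (p.2 i) = interpolate (i + 1) p := by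
  ext j
  by_cases hj : j = i
  · subst hj; simp [interpolate, swapOn]
  · have hlt : (j : ℕ) < i ↔ (j : ℕ) < i + 1 := by
      have := Fin.val_ne_iff.2 hj; omega
    simp only [update_of_ne hj, interpolate, swapOn, piecewise, mem_ofPred_eq, hlt]

lemma interpolate_swapOn_singleton (i : Fin N) (p : (∀ i, Ω i) × (∀ i, Ω i)) :
    interpolate i (swapOn {i} p) = interpolate (i + 1) p := by
  rw [← update_interpolate]
  ext j
  by_cases hj : j = i
  · subst hj; simp [interpolate, swapOn]
  · simp only [update_of_ne hj, interpolate, swapOn, piecewise, mem_ofPred_eq,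
      mem_singleton_iff, hj, if_false]

variable [∀ i, MeasurableSpace (Ω i)] (μ : ∀ i, Measure (Ω i))

lemma memLp_comp_interpolate [∀ i, IsFiniteMeasure (μ i)] {f : (∀ i, Ω i) → ℝ}
    (hf : MemLp f 2 (Measure.pi μ)) (k : ℕ) :
    MemLp (fun p => f (interpolate k p)) 2 ((Measure.pi μ).prod (Measure.pi μ)) :=
  (hf.comp_fst (Measure.pi μ)).comp_measurePreserving (measurePreserving_swapOn _ μ)

lemma integral_sq_sub_interpolate [∀ i, SigmaFinite (μ i)] (f : (∀ i, Ω i) → ℝ) (i : Fin N) :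
    ∫ p, (f (interpolate i p) - f (interpolate (i + 1) p)) ^ 2
        ∂((Measure.pi μ).prod (Measure.pi μ))
      = ∫ p, (f p.1 - f (update p.1 i (p.2 i))) ^ 2 ∂((Measure.pi μ).prod (Measure.pi μ)) := by
  conv_rhs => rw [← integral_comp_involutive
    (measurePreserving_swapOn {j : Fin N | (j : ℕ) < i} μ) (swapOn_involutive _)]
  congr! 3 with p
  rw [← update_interpolate]
  simp [interpolate, swapOn]

lemma integral_mul_sub_interpolate_le [∀ i, IsFiniteMeasure (μ i)] {f g : (∀ i, Ω i) → ℝ}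
    (hf : MemLp f 2 (Measure.pi μ)) (hg : MemLp g 2 (Measure.pi μ)) (i : Fin N) :
    ∫ p, g p.1 * (f (interpolate i p) - f (interpolate (i + 1) p))
        ∂((Measure.pi μ).prod (Measure.pi μ))
      ≤ 1 / 2 * (√(∫ p, (g p.1 - g (update p.1 i (p.2 i))) ^ 2
            ∂((Measure.pi μ).prod (Measure.pi μ)))
        * √(∫ p, (f p.1 - f (update p.1 i (p.2 i))) ^ 2
            ∂((Measure.pi μ).prod (Measure.pi μ)))) := by
  have hanti (p : (∀ i, Ω i) × (∀ i, Ω i)) :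
      f (interpolate i (swapOn {i} p)) - f (interpolate (i + 1) (swapOn {i} p))
        = -(f (interpolate i p) - f (interpolate (i + 1) p)) := by
    have h := interpolate_swapOn_singleton i (swapOn {i} p)
    rw [swapOn_involutive {i} p] at h
    rw [interpolate_swapOn_singleton, ← h, neg_sub]
  have h := integral_mul_le_of_involutive (measurePreserving_swapOn {i} μ) (swapOn_involutive _)
    (hg.comp_fst _) ((memLp_comp_interpolate μ hf _).sub (memLp_comp_interpolate μ hf _)) hanti
  simpa only [swapOn_singleton_fst, Pi.sub_apply, integral_sq_sub_interpolate] using h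

end Interpolation

theorem efron_stein_covariance_general
    {N : ℕ} {Ω : Fin N → Type*} [∀ i, MeasurableSpace (Ω i)]
    (μ : ∀ i, Measure (Ω i)) [∀ i, IsProbabilityMeasure (μ i)]
    (f g : (∀ i, Ω i) → ℝ)
    (hf2 : MemLp f 2 (Measure.pi μ)) (hg2 : MemLp g 2 (Measure.pi μ)) :
    (∫ x, g x * f x ∂(Measure.pi μ))
        - (∫ x, g x ∂(Measure.pi μ)) * (∫ x, f x ∂(Measure.pi μ))
      ≤ (1 / 2) * ∑ i : Fin N,
          Real.sqrt (∫ p, (g p.1 - g (Function.update p.1 i (p.2 i))) ^ 2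
              ∂((Measure.pi μ).prod (Measure.pi μ)))
          * Real.sqrt (∫ p, (f p.1 - f (Function.update p.1 i (p.2 i))) ^ 2
              ∂((Measure.pi μ).prod (Measure.pi μ))) := by
  set ν := (Measure.pi μ).prod (Measure.pi μ)
  have hint (k : ℕ) : Integrable (fun p => g p.1 * f (interpolate k p)) ν :=
    (hg2.comp_fst _).integrable_mul (memLp_comp_interpolate μ hf2 k)
  have hstart : ∫ x, g x * f x ∂(Measure.pi μ) = ∫ p, g p.1 * f (interpolate 0 p) ∂ν := by
    simpa [ν, interpolate_zero] using
      (integral_fun_fst (ν := Measure.pi μ) fun x => g x * f x).symm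
  have hend : (∫ x, g x ∂(Measure.pi μ)) * (∫ x, f x ∂(Measure.pi μ))
      = ∫ p, g p.1 * f (interpolate N p) ∂ν := by
    simp [ν, interpolate_self, integral_prod_mul]
  rw [hstart, hend,
    ← Finset.sum_range_sub' (fun k => ∫ p, g p.1 * f (interpolate k p) ∂ν),
    ← Fin.sum_univ_eq_sum_range, Finset.mul_sum]
  gcongr with i
  rw [← integral_sub (hint _) (hint _)]
  simpa only [mul_sub] using integral_mul_sub_interpolate_le μ hf2 hg2 i

/-- Covariance version of the Efron–Stein inequality: with `X₁, …, X_N`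
independent (represented by the product measure `⊗ᵢ μᵢ`), resampled versions
`Y⁽ⁱ⁾, Z⁽ⁱ⁾` obtained by replacing the `i`-th coordinate with an independent
copy, and `Y = g(X), Z = f(X)` square-integrable,
`Cov[Y, Z] ≤ (1/2) Σᵢ E[(Y − Y⁽ⁱ⁾)²]^{1/2} E[(Z − Z⁽ⁱ⁾)²]^{1/2}`. -/
theorem efron_stein_covariance
    {N : ℕ} {Ω : Fin N → Type*} [∀ i, MeasurableSpace (Ω i)]
    (μ : ∀ i, Measure (Ω i)) [∀ i, IsProbabilityMeasure (μ i)]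
    (f g : (∀ i, Ω i) → ℝ) (hf : Measurable f) (hg : Measurable g)
    (hf2 : MemLp f 2 (Measure.pi μ)) (hg2 : MemLp g 2 (Measure.pi μ)) :
    (∫ x, g x * f x ∂(Measure.pi μ))
        - (∫ x, g x ∂(Measure.pi μ)) * (∫ x, f x ∂(Measure.pi μ))
      ≤ (1 / 2) * ∑ i : Fin N,
          Real.sqrt (∫ p, (g p.1 - g (Function.update p.1 i (p.2 i))) ^ 2
              ∂((Measure.pi μ).prod (Measure.pi μ)))
          * Real.sqrt (∫ p, (f p.1 - f (Function.update p.1 i (p.2 i))) ^ 2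
              ∂((Measure.pi μ).prod (Measure.pi μ))) :=
  efron_stein_covariance_general μ f g hf2 hg2
end

section
/- Let Z ∈ L²(Ω) and let (ℱ_n)_{n≥0} be a filtration with ℱ_0 trivial and Z measurable with respect to σ(⋃_n ℱ_n). Then for square-integrable Y, Z, |Cov[Y, Z]| ≤ Σ_{k=1}^∞ E[ |Cov_k[E[Y|ℱ_k]; E[Z|ℱ_k]]| ], where Cov_k[U;V] := E[UV | 𝒢_k] − E[U|𝒢_k]·E[V|𝒢_k] and 𝒢_k is a σ-algebra such that E[·|𝒢_k]∘E[·|ℱ_k] = E[·|ℱ_{k−1}] on L². -/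
/-!
Write `U_k = E[Y | ℱ_k]`, `V_k = E[Z | ℱ_k]` and `a_k = E[U_k V_k]`, so that `a_0 = E[Y] E[Z]`.
The tower hypothesis says `E[U_k | 𝒢_k] = U_{k-1}` and `E[V_k | 𝒢_k] = V_{k-1}`, hence
`a_k - a_{k-1} = E[Cov_k[U_k; V_k]]` and `|a_N - a_0| ≤ Σ_{k ≤ N} E|Cov_k[U_k; V_k]|`.
Since `Cov_k[U_k; V_k] = E[(U_k - U_{k-1})(V_k - V_{k-1}) | 𝒢_k]`, AM-GM and Pythagoras give
`E|Cov_k| ≤ (‖U_k‖² - ‖U_{k-1}‖² + ‖V_k‖² - ‖V_{k-1}‖²) / 2`, a telescoping bound by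
`(‖Y‖² + ‖Z‖²) / 2`; so the series converges.
Finally `a_N = E[Y V_N] → E[Y Z]`, because `V_N → Z` in L²: the energies `‖V_N‖²` increase
and are bounded by `‖Z‖²`, while Fatou along Lévy's a.e. convergence `V_N → Z` bounds their
limit from below by `‖Z‖²`.
-/

open MeasureTheory ProbabilityTheory Filter Topology

lemma abs_sub_le_tsum_of_tendsto {a t : ℕ → ℝ} {l : ℝ} (ha : Tendsto a atTop (𝓝 l))
    (ht : Summable t) (hat : ∀ k, |a (k + 1) - a k| ≤ t k) : |l - a 0| ≤ ∑' k, t k := by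
  refine le_of_tendsto_of_tendsto' (ha.sub_const (a 0)).abs ht.hasSum.tendsto_sum_nat fun n => ?_
  rw [← Finset.sum_range_sub]
  exact (Finset.abs_sum_le_sum_abs _ _).trans (Finset.sum_le_sum fun k _ => hat k)

lemma summable_of_le_sub_of_le {t e : ℕ → ℝ} {C : ℝ} (ht : ∀ k, 0 ≤ t k)
    (hte : ∀ k, t k ≤ e (k + 1) - e k) (heC : ∀ n, e n ≤ C) : Summable t :=
  summable_of_sum_range_le (c := C - e 0) ht fun n =>
    (Finset.sum_le_sum fun k _ => hte k).trans (by rw [Finset.sum_range_sub]; linarith [heC n])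

section Integral

variable {Ω : Type*} [MeasurableSpace Ω] {μ : Measure Ω}

lemma abs_integral_mul_le_sqrt_mul_sqrt {f g : Ω → ℝ} (hf : MemLp f 2 μ) (hg : MemLp g 2 μ) :
    |∫ ω, f ω * g ω ∂μ| ≤ √(∫ ω, f ω ^ 2 ∂μ) * √(∫ ω, g ω ^ 2 ∂μ) := by
  have hpq : (2 : ℝ).HolderConjugate 2 := ⟨by norm_num, by norm_num, by norm_num⟩
  have h2 : ENNReal.ofReal 2 = 2 := by norm_num
  calc |∫ ω, f ω * g ω ∂μ| ≤ ∫ ω, |f ω * g ω| ∂μ := abs_integral_le_integral_abs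
    _ = ∫ ω, |f ω| * |g ω| ∂μ := by simp only [abs_mul]
    _ ≤ _ := by
        simpa only [Real.rpow_two, sq_abs, ← Real.sqrt_eq_rpow] using
          integral_mul_le_Lp_mul_Lq_of_nonneg hpq (.of_forall fun ω => abs_nonneg (f ω))
            (.of_forall fun ω => abs_nonneg (g ω)) (h2 ▸ hf.abs) (h2 ▸ hg.abs)

lemma tendsto_integral_mul_of_tendsto_integral_sq_sub {Y Z : Ω → ℝ} {V : ℕ → Ω → ℝ}
    (hY : MemLp Y 2 μ) (hZ : MemLp Z 2 μ) (hV : ∀ n, MemLp (V n) 2 μ)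
    (hVZ : Tendsto (fun n => ∫ ω, (Z ω - V n ω) ^ 2 ∂μ) atTop (𝓝 0)) :
    Tendsto (fun n => ∫ ω, Y ω * V n ω ∂μ) atTop (𝓝 (∫ ω, Y ω * Z ω ∂μ)) := by
  rw [tendsto_iff_dist_tendsto_zero]
  have hbound : Tendsto (fun n => √(∫ ω, Y ω ^ 2 ∂μ) * √(∫ ω, (Z ω - V n ω) ^ 2 ∂μ)) atTop
      (𝓝 0) := by
    simpa using hVZ.sqrt.const_mul √(∫ ω, Y ω ^ 2 ∂μ)
  refine squeeze_zero (fun n => dist_nonneg) (fun n => ?_) hbound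
  have hYV : Integrable (fun ω => Y ω * V n ω) μ := hY.integrable_mul (hV n)
  have hYZ : Integrable (fun ω => Y ω * Z ω) μ := hY.integrable_mul hZ
  have hCS := abs_integral_mul_le_sqrt_mul_sqrt hY (hZ.sub (hV n))
  simp only [Pi.sub_apply] at hCS
  rw [Real.dist_eq, ← integral_sub hYV hYZ, ← abs_neg, ← integral_neg]
  convert hCS using 4 with ω
  ring

lemma integral_le_of_tendsto_ae_of_tendsto_integral {f : ℕ → Ω → ℝ} {g : Ω → ℝ} {L : ℝ}
    (hf : ∀ n, 0 ≤ᵐ[μ] f n) (hfi : ∀ n, Integrable (f n) μ) (hg : Integrable g μ)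
    (hfg : ∀ᵐ ω ∂μ, Tendsto (fun n => f n ω) atTop (𝓝 (g ω)))
    (hL : Tendsto (fun n => ∫ ω, f n ω ∂μ) atTop (𝓝 L)) :
    ∫ ω, g ω ∂μ ≤ L := by
  have hL0 : 0 ≤ L := ge_of_tendsto' hL fun n => integral_nonneg_of_ae (hf n)
  have hg0 : 0 ≤ᵐ[μ] g := by
    filter_upwards [hfg, ae_all_iff.2 hf] with ω hlim hnonneg using ge_of_tendsto' hlim hnonneg
  rw [← ENNReal.ofReal_le_ofReal_iff hL0, ofReal_integral_eq_lintegral_ofReal hg hg0]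
  calc ∫⁻ ω, ENNReal.ofReal (g ω) ∂μ
      = ∫⁻ ω, liminf (fun n => ENNReal.ofReal (f n ω)) atTop ∂μ :=
        lintegral_congr_ae <| hfg.mono fun ω h => (ENNReal.tendsto_ofReal h).liminf_eq.symm
    _ ≤ liminf (fun n => ∫⁻ ω, ENNReal.ofReal (f n ω) ∂μ) atTop :=
        lintegral_liminf_le' fun n => (hfi n).aemeasurable.ennreal_ofReal
    _ = ENNReal.ofReal L := by
        simp_rw [← ofReal_integral_eq_lintegral_ofReal (hfi _) (hf _)]
        exact (ENNReal.tendsto_ofReal hL).liminf_eq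

end Integral

noncomputable def condCov {Ω : Type*} {m₀ : MeasurableSpace Ω} (m : MeasurableSpace Ω)
    (U V : Ω → ℝ) (μ : Measure[m₀] Ω) : Ω → ℝ :=
  μ[U * V | m] - μ[U | m] * μ[V | m]

section ConditionalExpectation

variable {Ω : Type*} {m m₀ : MeasurableSpace Ω} {μ : Measure[m₀] Ω} [IsFiniteMeasure μ]
  {X U V : Ω → ℝ}

lemma integral_condExp_mul_of_stronglyMeasurable (hm : m ≤ m₀) {g : Ω → ℝ}
    (hg : StronglyMeasurable[m] g) (hXg : Integrable (X * g) μ) (hX : Integrable X μ) :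
    ∫ ω, (μ[X | m]) ω * g ω ∂μ = ∫ ω, X ω * g ω ∂μ :=
  calc ∫ ω, (μ[X | m]) ω * g ω ∂μ = ∫ ω, (μ[X * g | m]) ω ∂μ :=
        integral_congr_ae (condExp_mul_of_stronglyMeasurable_right hg hXg hX).symm
    _ = ∫ ω, X ω * g ω ∂μ := integral_condExp hm

lemma integral_sq_sub_condExp (hm : m ≤ m₀) (hX : MemLp X 2 μ) :
    ∫ ω, (X ω - (μ[X | m]) ω) ^ 2 ∂μ = ∫ ω, X ω ^ 2 ∂μ - ∫ ω, (μ[X | m]) ω ^ 2 ∂μ :=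
  calc ∫ ω, (X ω - (μ[X | m]) ω) ^ 2 ∂μ = ∫ ω, (Var[X; μ | m]) ω ∂μ := (integral_condExp hm).symm
    _ = ∫ ω, ((μ[X ^ 2 | m]) ω - (μ[X | m]) ω ^ 2) ∂μ :=
        integral_congr_ae (condVar_ae_eq_condExp_sq_sub_sq_condExp hm hX)
    _ = ∫ ω, X ω ^ 2 ∂μ - ∫ ω, (μ[X | m]) ω ^ 2 ∂μ := by
        rw [integral_sub integrable_condExp (hX.condExp one_le_two).integrable_sq,
          integral_condExp hm]
        rfl

lemma integral_sq_condExp_le (hm : m ≤ m₀) (hX : MemLp X 2 μ) :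
    ∫ ω, (μ[X | m]) ω ^ 2 ∂μ ≤ ∫ ω, X ω ^ 2 ∂μ := by
  have h := integral_sq_sub_condExp hm hX
  have h0 : 0 ≤ ∫ ω, (X ω - (μ[X | m]) ω) ^ 2 ∂μ := integral_nonneg fun ω => sq_nonneg _
  linarith


lemma condCov_ae_eq_condExp_mul (hm : m ≤ m₀) (hU : MemLp U 2 μ) (hV : MemLp V 2 μ) :
    condCov m U V μ =ᵐ[μ] μ[(U - μ[U | m]) * (V - μ[V | m]) | m] := by
  have hu := hU.condExp (m := m) one_le_two
  have hv := hV.condExp (m := m) one_le_two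
  have hUV : Integrable (U * V) μ := hU.integrable_mul hV
  have huV : Integrable (μ[U | m] * V) μ := hu.integrable_mul hV
  have hvU : Integrable (μ[V | m] * U) μ := hv.integrable_mul hU
  have huv : Integrable (μ[U | m] * μ[V | m]) μ := hu.integrable_mul hv
  have hexpand : (U - μ[U | m]) * (V - μ[V | m])
      = U * V - μ[U | m] * V - (μ[V | m] * U - μ[U | m] * μ[V | m]) := by ring
  rw [hexpand]
  filter_upwards [condExp_sub (hUV.sub huV) (hvU.sub huv) m, condExp_sub hUV huV m,
    condExp_sub hvU huv m,
    condExp_mul_of_stronglyMeasurable_left stronglyMeasurable_condExp huV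
      (hV.integrable one_le_two),
    condExp_mul_of_stronglyMeasurable_left stronglyMeasurable_condExp hvU
      (hU.integrable one_le_two)]
    with ω h h₁ h₂ h₃ h₄
  rw [condExp_of_stronglyMeasurable hm (stronglyMeasurable_condExp.mul stronglyMeasurable_condExp)
    huv] at h₂
  simp only [condCov, Pi.sub_apply, Pi.mul_apply] at h h₁ h₂ h₃ h₄ ⊢
  rw [h, h₁, h₂, h₃, h₄]
  ring

lemma integral_mul_sub_integral_mul_eq_integral_condCov {U₀ V₀ : Ω → ℝ} (hm : m ≤ m₀)
    (hU : MemLp U 2 μ) (hV : MemLp V 2 μ) (hU₀ : μ[U | m] =ᵐ[μ] U₀) (hV₀ : μ[V | m] =ᵐ[μ] V₀) :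
    ∫ ω, U ω * V ω ∂μ - ∫ ω, U₀ ω * V₀ ω ∂μ = ∫ ω, condCov m U V μ ω ∂μ := by
  have huv : Integrable (μ[U | m] * μ[V | m]) μ :=
    (hU.condExp one_le_two).integrable_mul (hV.condExp one_le_two)
  have h₀ : ∫ ω, U₀ ω * V₀ ω ∂μ = ∫ ω, (μ[U | m]) ω * (μ[V | m]) ω ∂μ :=
    integral_congr_ae (hU₀.mul hV₀).symm
  rw [h₀, condCov, integral_sub' integrable_condExp huv, integral_condExp hm]
  rfl

lemma integral_abs_condCov_le {U₀ V₀ : Ω → ℝ} (hm : m ≤ m₀) (hU : MemLp U 2 μ)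
    (hV : MemLp V 2 μ) (hU₀ : μ[U | m] =ᵐ[μ] U₀) (hV₀ : μ[V | m] =ᵐ[μ] V₀) :
    ∫ ω, |condCov m U V μ ω| ∂μ
      ≤ ((∫ ω, U ω ^ 2 ∂μ - ∫ ω, U₀ ω ^ 2 ∂μ) + (∫ ω, V ω ^ 2 ∂μ - ∫ ω, V₀ ω ^ 2 ∂μ)) / 2 := by
  set U' := U - μ[U | m]
  set V' := V - μ[V | m]
  have hU' : MemLp U' 2 μ := hU.sub (hU.condExp one_le_two)
  have hV' : MemLp V' 2 μ := hV.sub (hV.condExp one_le_two)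
  calc ∫ ω, |condCov m U V μ ω| ∂μ
      = ∫ ω, |(μ[U' * V' | m]) ω| ∂μ :=
        integral_congr_ae <| (condCov_ae_eq_condExp_mul hm hU hV).mono fun ω h => congrArg abs h
    _ ≤ ∫ ω, |U' ω * V' ω| ∂μ := integral_abs_condExp_le _
    _ ≤ ∫ ω, (U' ω ^ 2 + V' ω ^ 2) / 2 ∂μ := by
        refine integral_mono (hU'.integrable_mul hV').abs
          ((hU'.integrable_sq.add hV'.integrable_sq).div_const 2) fun ω => ?_
        rw [abs_le]
        constructor <;> nlinarith [sq_nonneg (U' ω + V' ω), sq_nonneg (U' ω - V' ω)]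
    _ = _ := by
        have hU₀' : ∫ ω, U₀ ω ^ 2 ∂μ = ∫ ω, (μ[U | m]) ω ^ 2 ∂μ :=
          integral_congr_ae (hU₀.fun_comp (· ^ 2)).symm
        have hV₀' : ∫ ω, V₀ ω ^ 2 ∂μ = ∫ ω, (μ[V | m]) ω ^ 2 ∂μ :=
          integral_congr_ae (hV₀.fun_comp (· ^ 2)).symm
        rw [hU₀', hV₀', ← integral_sq_sub_condExp hm hU, ← integral_sq_sub_condExp hm hV,
          integral_div, integral_add hU'.integrable_sq hV'.integrable_sq]
        rfl

lemma tendsto_integral_sq_sub_condExp (ℱ : Filtration ℕ m₀) {Z : Ω → ℝ} (hZ : MemLp Z 2 μ)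
    (hZm : StronglyMeasurable[⨆ n, ℱ n] Z) :
    Tendsto (fun n => ∫ ω, (Z ω - (μ[Z | ℱ n]) ω) ^ 2 ∂μ) atTop (𝓝 0) := by
  set b : ℕ → ℝ := fun n => ∫ ω, (μ[Z | ℱ n]) ω ^ 2 ∂μ
  have hb_le : ∀ n, b n ≤ ∫ ω, Z ω ^ 2 ∂μ := fun n => integral_sq_condExp_le (ℱ.le n) hZ
  have hb_mono : Monotone b := monotone_nat_of_le_succ fun n =>
    calc b n = ∫ ω, (μ[μ[Z | ℱ (n + 1)] | ℱ n]) ω ^ 2 ∂μ :=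
          integral_congr_ae ((condExp_condExp_of_le (ℱ.mono n.le_succ) (ℱ.le _)).fun_comp
            (· ^ 2)).symm
      _ ≤ b (n + 1) := integral_sq_condExp_le (ℱ.le n) (hZ.condExp one_le_two)
  have hb_lim : Tendsto b atTop (𝓝 (⨆ n, b n)) :=
    tendsto_atTop_ciSup hb_mono ⟨_, Set.forall_mem_range.2 hb_le⟩
  have hb_sup : ⨆ n, b n = ∫ ω, Z ω ^ 2 ∂μ := by
    refine le_antisymm (ciSup_le hb_le) (integral_le_of_tendsto_ae_of_tendsto_integral
      (fun n => .of_forall fun ω => sq_nonneg _)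
      (fun n => (hZ.condExp one_le_two).integrable_sq) hZ.integrable_sq ?_ hb_lim)
    exact ((hZ.integrable one_le_two).tendsto_ae_condExp hZm).mono fun ω h => h.pow 2
  simp_rw [integral_sq_sub_condExp (ℱ.le _) hZ]
  have h := (tendsto_const_nhds (x := ∫ ω, Z ω ^ 2 ∂μ)).sub hb_lim
  rwa [hb_sup, sub_self] at h

lemma tendsto_integral_condExp_mul_condExp (ℱ : Filtration ℕ m₀) {Y Z : Ω → ℝ}
    (hY : MemLp Y 2 μ) (hZ : MemLp Z 2 μ) (hZm : StronglyMeasurable[⨆ n, ℱ n] Z) :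
    Tendsto (fun n => ∫ ω, (μ[Y | ℱ n]) ω * (μ[Z | ℱ n]) ω ∂μ) atTop
      (𝓝 (∫ ω, Y ω * Z ω ∂μ)) := by
  refine (tendsto_integral_mul_of_tendsto_integral_sq_sub hY hZ (fun n => hZ.condExp one_le_two)
    (tendsto_integral_sq_sub_condExp ℱ hZ hZm)).congr fun n => ?_
  exact (integral_condExp_mul_of_stronglyMeasurable (ℱ.le n) stronglyMeasurable_condExp
    (hY.integrable_mul (hZ.condExp one_le_two)) (hY.integrable one_le_two)).symm

end ConditionalExpectation

/-- Martingale (Lu–Yau) telescoping decomposition of the covariance: given a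
filtration `(ℱ_n)` with `ℱ_0` trivial, σ-algebras `𝒢_k` satisfying the tower
property `E[E[·|ℱ_k]|𝒢_k] = E[·|ℱ_{k−1}]` on L², and `Z` measurable with
respect to `σ(⋃ₙ ℱ_n)`, one has
`|Cov[Y,Z]| ≤ Σ_{k≥1} E[|Cov_k[E[Y|ℱ_k]; E[Z|ℱ_k]]|]` where
`Cov_k[U;V] = E[UV|𝒢_k] − E[U|𝒢_k]E[V|𝒢_k]`. -/
theorem covariance_martingale_telescoping
    {Ω : Type*} [m0 : MeasurableSpace Ω] (P : Measure Ω) [IsProbabilityMeasure P]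
    (ℱ 𝒢 : ℕ → MeasurableSpace Ω)
    (hℱle : ∀ n, ℱ n ≤ m0) (hℱmono : Monotone ℱ) (hℱ0 : ℱ 0 = ⊥)
    (h𝒢le : ∀ n, 𝒢 n ≤ m0)
    (htower : ∀ k : ℕ, 1 ≤ k → ∀ W : Ω → ℝ, MemLp W 2 P →
      P[ (P[W | ℱ k]) | 𝒢 k] =ᵐ[P] P[W | ℱ (k - 1)])
    (Y Z : Ω → ℝ) (hY : MemLp Y 2 P) (hZ : MemLp Z 2 P)
    (hZmeas : Measurable[⨆ n, ℱ n] Z) :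
    |(∫ ω, Y ω * Z ω ∂P) - (∫ ω, Y ω ∂P) * (∫ ω, Z ω ∂P)|
      ≤ ∑' k : ℕ,
          ∫ ω, |(P[fun ω' => (P[Y | ℱ (k + 1)]) ω' * (P[Z | ℱ (k + 1)]) ω' | 𝒢 (k + 1)]) ω
              - (P[ (P[Y | ℱ (k + 1)]) | 𝒢 (k + 1)]) ω
                * (P[ (P[Z | ℱ (k + 1)]) | 𝒢 (k + 1)]) ω| ∂P := by
  set U : ℕ → Ω → ℝ := fun k => P[Y | ℱ k]
  set V : ℕ → Ω → ℝ := fun k => P[Z | ℱ k]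
  have hU (k : ℕ) : MemLp (U k) 2 P := hY.condExp one_le_two
  have hV (k : ℕ) : MemLp (V k) 2 P := hZ.condExp one_le_two
  have htowerY (k : ℕ) : P[U (k + 1) | 𝒢 (k + 1)] =ᵐ[P] U k :=
    htower (k + 1) (Nat.le_add_left 1 k) Y hY
  have htowerZ (k : ℕ) : P[V (k + 1) | 𝒢 (k + 1)] =ᵐ[P] V k :=
    htower (k + 1) (Nat.le_add_left 1 k) Z hZ
  set a : ℕ → ℝ := fun k => ∫ ω, U k ω * V k ω ∂P
  set e : ℕ → ℝ := fun k => (∫ ω, U k ω ^ 2 ∂P + ∫ ω, V k ω ^ 2 ∂P) / 2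
  have ha0 : a 0 = (∫ ω, Y ω ∂P) * (∫ ω, Z ω ∂P) := by simp [a, U, V, hℱ0, condExp_bot]
  have ha : Tendsto a atTop (𝓝 (∫ ω, Y ω * Z ω ∂P)) :=
    tendsto_integral_condExp_mul_condExp ⟨ℱ, hℱmono, hℱle⟩ hY hZ hZmeas.stronglyMeasurable
  have he_le (k : ℕ) : e k ≤ (∫ ω, Y ω ^ 2 ∂P + ∫ ω, Z ω ^ 2 ∂P) / 2 := by
    have := integral_sq_condExp_le (hℱle k) hY
    have := integral_sq_condExp_le (hℱle k) hZ
    simp only [e, U, V]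
    linarith
  have hincr (k : ℕ) :
      |a (k + 1) - a k| ≤ ∫ ω, |condCov (𝒢 (k + 1)) (U (k + 1)) (V (k + 1)) P ω| ∂P :=
    integral_mul_sub_integral_mul_eq_integral_condCov (h𝒢le (k + 1)) (hU (k + 1)) (hV (k + 1))
      (htowerY k) (htowerZ k) ▸ abs_integral_le_integral_abs
  have hterm (k : ℕ) : ∫ ω, |condCov (𝒢 (k + 1)) (U (k + 1)) (V (k + 1)) P ω| ∂P
      ≤ e (k + 1) - e k := by
    refine (integral_abs_condCov_le (h𝒢le (k + 1)) (hU (k + 1)) (hV (k + 1))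
      (htowerY k) (htowerZ k)).trans_eq ?_
    simp only [e]
    ring
  rw [← ha0]
  exact abs_sub_le_tsum_of_tendsto ha
    (summable_of_le_sub_of_le (fun k => (abs_nonneg _).trans (hincr k)) hterm he_le) hincr
end
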